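/- arXiv:1212.3949 — 2 statements merged into one kernel-verified Lean document; each statement's English description precedes it below -/
import Mathlib

section
/- Let M be a Γ-semiring and A a nonempty subset of M. Then A ∪ AΓMΓA is the smallest generalized bi-Γ-ideal of M containing A; i.e., it is a generalized bi-Γ-ideal containing A, and it is contained in every generalized bi-Γ-ideal of M containing A. -/
/-- A Γ-semiring: additive commutative semigroups `M` and `G` with a triple
product `M → G → M → M` satisfying distributivity and associativity laws. -/
structure GammaSemiring (M G : Type*) [AddCommSemigroup M] [AddCommSemigroup G] where
  tmul : M → G → M → M
  left_distrib : ∀ a γ b c, tmul a γ (b + c) = tmul a γ b + tmul a γ c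
  right_distrib : ∀ a b γ c, tmul (a + b) γ c = tmul a γ c + tmul b γ c
  gamma_distrib : ∀ a γ δ b, tmul a (γ + δ) b = tmul a γ b + tmul a δ b
  mul_assoc : ∀ a γ b δ c, tmul (tmul a γ b) δ c = tmul a γ (tmul b δ c)

namespace GammaSemiring

variable {M G : Type*} [AddCommSemigroup M] [AddCommSemigroup G]

/-- `AΓB`: the set of all finite (nonempty) sums `Σᵢ aᵢγᵢbᵢ` with `aᵢ ∈ A`,
`γᵢ ∈ Γ`, `bᵢ ∈ B`, realized as the additive subsemigroup closure of the set
of single products. -/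
def sprod (gs : GammaSemiring M G) (A B : Set M) : Set M :=
  (AddSubsemigroup.closure {x | ∃ a ∈ A, ∃ γ : G, ∃ b ∈ B, x = gs.tmul a γ b} :
    AddSubsemigroup M)

/-- A generalized bi-Γ-ideal of `M`: a nonempty subset `A` with `AΓMΓA ⊆ A`. -/
def IsGenBiIdeal (gs : GammaSemiring M G) (A : Set M) : Prop :=
  A.Nonempty ∧ gs.sprod (gs.sprod A Set.univ) A ⊆ A

/-- A sub-Γ-semiring: nonempty, closed under addition and the Γ-product. -/
def IsSubGammaSemiring (gs : GammaSemiring M G) (T : Set M) : Prop :=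
  T.Nonempty ∧ (∀ a ∈ T, ∀ b ∈ T, a + b ∈ T) ∧
    ∀ a ∈ T, ∀ γ : G, ∀ b ∈ T, gs.tmul a γ b ∈ T

/-- A generalized bi-Γ-ideal of the Γ-semiring `T` (a subset of `M`):
a nonempty subset `A ⊆ T` with `AΓTΓA ⊆ A`. -/
def IsGenBiIdealIn (gs : GammaSemiring M G) (T A : Set M) : Prop :=
  A.Nonempty ∧ A ⊆ T ∧ gs.sprod (gs.sprod A T) A ⊆ A

/-- A Γ-ideal of `M`. -/
def IsGammaIdeal (gs : GammaSemiring M G) (A : Set M) : Prop :=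
  A.Nonempty ∧ (∀ a ∈ A, ∀ b ∈ A, a + b ∈ A) ∧
    ∀ a ∈ A, ∀ γ : G, ∀ x : M, gs.tmul x γ a ∈ A ∧ gs.tmul a γ x ∈ A

/-- A quasi-Γ-ideal of `M`: a sub-Γ-semiring `A` with `AΓM ∩ MΓA ⊆ A`. -/
def IsQuasiGammaIdeal (gs : GammaSemiring M G) (A : Set M) : Prop :=
  gs.IsSubGammaSemiring A ∧ gs.sprod A Set.univ ∩ gs.sprod Set.univ A ⊆ A

/-- A bi-Γ-ideal of `M`: a sub-Γ-semiring `A` with `AΓMΓA ⊆ A`. -/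
def IsBiIdeal (gs : GammaSemiring M G) (A : Set M) : Prop :=
  gs.IsSubGammaSemiring A ∧ gs.sprod (gs.sprod A Set.univ) A ⊆ A

/-- `M` is GB-simple: `M` is its unique generalized bi-Γ-ideal. -/
def GBSimple (gs : GammaSemiring M G) : Prop :=
  ∀ A : Set M, gs.IsGenBiIdeal A → A = Set.univ

/-- The sub-Γ-semiring `T`, regarded as a Γ-semiring, is GB-simple. -/
def GBSimpleIn (gs : GammaSemiring M G) (T : Set M) : Prop :=
  ∀ A : Set M, gs.IsGenBiIdealIn T A → A = T

end GammaSemiring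

open GammaSemiring

variable {M G : Type*} [AddCommSemigroup M] [AddCommSemigroup G]

/-!
Write `K = AΓM` and `B = KΓA`. Associativity makes `Γ`-products absorb everything to the right of
their first factor, so `BΓM ⊆ K` and `KΓB ⊆ B`; hence `(A ∪ B)ΓMΓ(A ∪ B) ⊆ KΓ(A ∪ B) ⊆ B`.
Minimality is monotonicity of `Γ`-products.
-/

namespace GammaSemiring

variable (gs : GammaSemiring M G) {A B C D E : Set M}

lemma tmul_mem_sprod {a b : M} (ha : a ∈ A) (γ : G) (hb : b ∈ B) :
    gs.tmul a γ b ∈ gs.sprod A B :=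
  AddSubsemigroup.subset_closure ⟨a, ha, γ, b, hb, rfl⟩

lemma add_mem_sprod {x y : M} (hx : x ∈ gs.sprod A B) (hy : y ∈ gs.sprod A B) :
    x + y ∈ gs.sprod A B :=
  AddSubsemigroup.add_mem _ hx hy

lemma sprod_induction {p : M → Prop} {x : M} (hx : x ∈ gs.sprod A B)
    (tmul : ∀ a ∈ A, ∀ γ : G, ∀ b ∈ B, p (gs.tmul a γ b))
    (add : ∀ x y, p x → p y → p (x + y)) : p x := by
  refine AddSubsemigroup.closure_induction (p := fun z _ => p z) ?_
    (fun x y _ _ hx hy => add x y hx hy) hx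
  rintro _ ⟨a, ha, γ, b, hb, rfl⟩
  exact tmul a ha γ b hb

lemma sprod_subset_sprod (h : ∀ a ∈ A, ∀ γ : G, ∀ b ∈ B, gs.tmul a γ b ∈ gs.sprod C D) :
    gs.sprod A B ⊆ gs.sprod C D :=
  AddSubsemigroup.closure_le.2 <| by
    rintro _ ⟨a, ha, γ, b, hb, rfl⟩
    exact h a ha γ b hb

lemma sprod_mono (hAC : A ⊆ C) (hBD : B ⊆ D) : gs.sprod A B ⊆ gs.sprod C D :=
  gs.sprod_subset_sprod fun _ ha γ _ hb => gs.tmul_mem_sprod (hAC ha) γ (hBD hb)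

lemma sprod_assoc : gs.sprod (gs.sprod A B) C = gs.sprod A (gs.sprod B C) := by
  apply Set.Subset.antisymm
  · refine gs.sprod_subset_sprod fun x hx γ c hc => ?_
    refine gs.sprod_induction hx (p := fun x => gs.tmul x γ c ∈ _) ?_ ?_
    · intro a ha δ b hb
      rw [gs.mul_assoc]
      exact gs.tmul_mem_sprod ha δ (gs.tmul_mem_sprod hb γ hc)
    · intro x y hx hy
      rw [gs.right_distrib]
      exact gs.add_mem_sprod hx hy
  · refine gs.sprod_subset_sprod fun a ha γ x hx => ?_
    refine gs.sprod_induction hx (p := fun x => gs.tmul a γ x ∈ _) ?_ ?_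
    · intro b hb δ c hc
      rw [← gs.mul_assoc]
      exact gs.tmul_mem_sprod (gs.tmul_mem_sprod ha γ hb) δ hc
    · intro x y hx hy
      rw [gs.left_distrib]
      exact gs.add_mem_sprod hx hy

lemma sprod_sprod_subset_sprod_univ : gs.sprod (gs.sprod A B) C ⊆ gs.sprod A Set.univ :=
  gs.sprod_assoc.subset.trans (gs.sprod_mono subset_rfl (Set.subset_univ _))

lemma sprod_union_left_subset (hA : gs.sprod A C ⊆ gs.sprod D E)
    (hB : gs.sprod B C ⊆ gs.sprod D E) : gs.sprod (A ∪ B) C ⊆ gs.sprod D E := by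
  refine gs.sprod_subset_sprod ?_
  rintro x (hx | hx) γ y hy
  · exact hA (gs.tmul_mem_sprod hx γ hy)
  · exact hB (gs.tmul_mem_sprod hx γ hy)

lemma sprod_union_right_subset (hA : gs.sprod C A ⊆ gs.sprod D E)
    (hB : gs.sprod C B ⊆ gs.sprod D E) : gs.sprod C (A ∪ B) ⊆ gs.sprod D E := by
  refine gs.sprod_subset_sprod ?_
  rintro x hx γ y (hy | hy)
  · exact hA (gs.tmul_mem_sprod hx γ hy)
  · exact hB (gs.tmul_mem_sprod hx γ hy)

lemma sprod_sprod_univ_union_subset (A : Set M) :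
    gs.sprod (gs.sprod (A ∪ gs.sprod (gs.sprod A Set.univ) A) Set.univ)
        (A ∪ gs.sprod (gs.sprod A Set.univ) A) ⊆ gs.sprod (gs.sprod A Set.univ) A := by
  set K := gs.sprod A Set.univ
  set B := gs.sprod K A
  have hKK : gs.sprod K K ⊆ K := gs.sprod_sprod_subset_sprod_univ
  have hBM : gs.sprod B Set.univ ⊆ K :=
    gs.sprod_sprod_subset_sprod_univ.trans gs.sprod_sprod_subset_sprod_univ
  have hKB : gs.sprod K B ⊆ B := gs.sprod_assoc.symm.subset.trans (gs.sprod_mono hKK subset_rfl)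
  calc gs.sprod (gs.sprod (A ∪ B) Set.univ) (A ∪ B)
      ⊆ gs.sprod K (A ∪ B) := gs.sprod_mono (gs.sprod_union_left_subset subset_rfl hBM) subset_rfl
    _ ⊆ B := gs.sprod_union_right_subset subset_rfl hKB

lemma isGenBiIdeal_union_sprod_sprod (hA : A.Nonempty) :
    gs.IsGenBiIdeal (A ∪ gs.sprod (gs.sprod A Set.univ) A) :=
  ⟨hA.mono Set.subset_union_left,
    (gs.sprod_sprod_univ_union_subset A).trans Set.subset_union_right⟩

lemma IsGenBiIdeal.sprod_sprod_univ_subset {gs : GammaSemiring M G} (hC : gs.IsGenBiIdeal C)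
    (hAC : A ⊆ C) : gs.sprod (gs.sprod A Set.univ) A ⊆ C :=
  (gs.sprod_mono (gs.sprod_mono hAC subset_rfl) hAC).trans hC.2

end GammaSemiring

theorem stmt3 (gs : GammaSemiring M G) (A : Set M) (hA : A.Nonempty) :
    gs.IsGenBiIdeal (A ∪ gs.sprod (gs.sprod A Set.univ) A) ∧
    A ⊆ A ∪ gs.sprod (gs.sprod A Set.univ) A ∧
    ∀ C : Set M, gs.IsGenBiIdeal C → A ⊆ C →
      A ∪ gs.sprod (gs.sprod A Set.univ) A ⊆ C :=
  ⟨gs.isGenBiIdeal_union_sprod_sprod hA, Set.subset_union_left,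
    fun _ hC hAC => Set.union_subset hAC (hC.sprod_sprod_univ_subset hAC)⟩
end

section
/- Let M be a Γ-semiring, B a generalized bi-Γ-ideal of M, and T a sub-Γ-semiring of M. If T, regarded as a Γ-semiring, is GB-simple and T ∩ B ≠ ∅, then T ⊆ B. -/
open GammaSemiring

variable {M G : Type*} [AddCommSemigroup M] [AddCommSemigroup G]

namespace GammaSemiring

variable (gs : GammaSemiring M G)

theorem sprod_mono_s12 {A A' B B' : Set M} (hA : A ⊆ A') (hB : B ⊆ B') :
    gs.sprod A B ⊆ gs.sprod A' B' := by
  apply AddSubsemigroup.closure_mono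
  rintro x ⟨a, ha, γ, b, hb, rfl⟩
  exact ⟨a, hA ha, γ, b, hB hb, rfl⟩

theorem sprod_subset_of_add_mem_of_tmul_mem {A B S : Set M}
    (hadd : ∀ a ∈ S, ∀ b ∈ S, a + b ∈ S) (hmul : ∀ a ∈ A, ∀ γ : G, ∀ b ∈ B, gs.tmul a γ b ∈ S) :
    gs.sprod A B ⊆ S := by
  let S' : AddSubsemigroup M := ⟨S, fun ha hb => hadd _ ha _ hb⟩
  change AddSubsemigroup.closure _ ≤ S'
  rw [AddSubsemigroup.closure_le]
  rintro x ⟨a, ha, γ, b, hb, rfl⟩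
  exact hmul a ha γ b hb

variable {gs}

theorem IsSubGammaSemiring.sprod_subset {A B T : Set M} (hT : gs.IsSubGammaSemiring T)
    (hA : A ⊆ T) (hB : B ⊆ T) : gs.sprod A B ⊆ T :=
  gs.sprod_subset_of_add_mem_of_tmul_mem hT.2.1 fun a ha γ b hb => hT.2.2 a (hA ha) γ b (hB hb)

theorem IsGenBiIdeal.inter_isGenBiIdealIn {B T : Set M} (hB : gs.IsGenBiIdeal B)
    (hT : gs.IsSubGammaSemiring T) (h : (T ∩ B).Nonempty) : gs.IsGenBiIdealIn T (T ∩ B) := by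
  refine ⟨h, Set.inter_subset_left, Set.subset_inter ?_ ?_⟩
  · exact hT.sprod_subset (hT.sprod_subset Set.inter_subset_left subset_rfl)
      Set.inter_subset_left
  · exact (gs.sprod_mono_s12 (gs.sprod_mono_s12 Set.inter_subset_right (Set.subset_univ T))
      Set.inter_subset_right).trans hB.2

end GammaSemiring

theorem stmt12 (gs : GammaSemiring M G) (B : Set M) (hB : gs.IsGenBiIdeal B)
    (T : Set M) (hT : gs.IsSubGammaSemiring T) (hsimple : gs.GBSimpleIn T)
    (h : (T ∩ B).Nonempty) : T ⊆ B := by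
  rw [← hsimple _ (hB.inter_isGenBiIdealIn hT h)]
  exact Set.inter_subset_right
end
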